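/- arXiv:1602.07632 — 8 statements merged into one kernel-verified Lean document; each statement's English description precedes it below -/
import Mathlib

section
/- Let C be a category with a zero object and let X be a commutative square in C, given by morphisms f : x ⟶ y, g : x ⟶ x', f' : x' ⟶ y', g' : y ⟶ y' with g' ∘ f = f' ∘ g, such that the kernels of f, f', g, g' exist. If the square X is a pullback square, then both partial kernel maps F₁X : ker f ⟶ ker f' and F₂X : ker g ⟶ ker g' are isomorphisms. -/
open CategoryTheory CategoryTheory.Limits

theorem partial_kernels_of_pullback_iso_general {C : Type*} [Category C]
    [HasZeroMorphisms C]
    {x y x' y' : C} (f : x ⟶ y) (g : x ⟶ x') (f' : x' ⟶ y') (g' : y ⟶ y')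
    (w : f ≫ g' = g ≫ f')
    [HasKernel f] [HasKernel f'] [HasKernel g] [HasKernel g']
    (hX : IsPullback g f f' g') :
    IsIso (kernel.map f f' g g' w) ∧ IsIso (kernel.map g g' f f' w.symm) :=
  ⟨isIso_kernel_map_of_isPullback hX.flip, isIso_kernel_map_of_isPullback hX⟩

/-- If a commutative square in a category with a zero object is a pullback square, then both
partial kernel maps `ker f ⟶ ker f'` and `ker g ⟶ ker g'` are isomorphisms. -/
theorem partial_kernels_of_pullback_iso {C : Type*} [Category C]
    [HasZeroObject C] [HasZeroMorphisms C]
    {x y x' y' : C} (f : x ⟶ y) (g : x ⟶ x') (f' : x' ⟶ y') (g' : y ⟶ y')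
    (w : f ≫ g' = g ≫ f')
    [HasKernel f] [HasKernel f'] [HasKernel g] [HasKernel g']
    (hX : IsPullback g f f' g') :
    IsIso (kernel.map f f' g g' w) ∧ IsIso (kernel.map g g' f f' w.symm) :=
  partial_kernels_of_pullback_iso_general f g f' g' w hX
end

section
/- Let C be a category with a zero object and let X be a commutative square in C, given by morphisms f : x ⟶ y, g : x ⟶ x', f' : x' ⟶ y', g' : y ⟶ y' with g' ∘ f = f' ∘ g. Assume the pushout p of the span (g, f) exists and all relevant cokernels exist. Then the total cofiber is isomorphic to both iterated cokernels: tcof X = coker(can : p ⟶ y') ≅ coker(C₁X : coker f ⟶ coker f') ≅ coker(C₂X : coker g ⟶ coker g'). -/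
/-!
A morphism out of `coker(can)` is a morphism out of `y'` killing `can`, i.e. (by the universal
property of the pushout) killing both `f'` and `g'`. A morphism out of `coker(C₁X)` is a
morphism out of `coker f'`, i.e. out of `y'` killing `f'`, which kills `C₁X`, i.e. whose
composite with `π_{f'} ∘ g' = C₁X ∘ π_f` vanishes, i.e. which kills `g'`. So both cokernels
corepresent the same functor. Exchanging the roles of `f` and `g` (pushout symmetry) gives
the second isomorphism.
-/

open CategoryTheory CategoryTheory.Limits

section TotalCofiber

variable {C : Type*} [Category C] {x y x' y' : C}
  {f : x ⟶ y} {g : x ⟶ x'} {f' : x' ⟶ y'} {g' : y ⟶ y'} (w : g ≫ f' = f ≫ g') [HasPushout g f]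

attribute [local instance] hasPushout_symmetry

lemma pushout_desc_symm_eq_pushoutSymmetry_inv_comp :
    pushout.desc g' f' w.symm = (pushoutSymmetry g f).inv ≫ pushout.desc f' g' w := by
  apply pushout.hom_ext
  · rw [pushout.inl_desc, inl_comp_pushoutSymmetry_inv_assoc, pushout.inr_desc]
  · rw [pushout.inr_desc, inr_comp_pushoutSymmetry_inv_assoc, pushout.inl_desc]

variable [HasZeroMorphisms C]

lemma comp_cokernel_π_pushout_desc_left [HasCokernel (pushout.desc f' g' w)] :
    f' ≫ cokernel.π (pushout.desc f' g' w) = 0 := by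
  simpa only [pushout.inl_desc_assoc, comp_zero] using
    pushout.inl g f ≫= cokernel.condition (pushout.desc f' g' w)

lemma comp_cokernel_π_pushout_desc_right [HasCokernel (pushout.desc f' g' w)] :
    g' ≫ cokernel.π (pushout.desc f' g' w) = 0 := by
  simpa only [pushout.inr_desc_assoc, comp_zero] using
    pushout.inr g f ≫= cokernel.condition (pushout.desc f' g' w)

instance hasCokernel_pushout_desc_symm [HasCokernel (pushout.desc f' g' w)] :
    HasCokernel (pushout.desc g' f' w.symm) := by
  rw [pushout_desc_symm_eq_pushoutSymmetry_inv_comp w]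
  infer_instance

noncomputable def cokernelPushoutDescSymmIso [HasCokernel (pushout.desc f' g' w)] :
    cokernel (pushout.desc g' f' w.symm) ≅ cokernel (pushout.desc f' g' w) :=
  cokernelIsoOfEq (pushout_desc_symm_eq_pushoutSymmetry_inv_comp w) ≪≫ cokernelEpiComp _ _

variable [HasCokernel f] [HasCokernel f']

lemma pushout_desc_comp_cokernel_π_comp_cokernel_π_map
    [HasCokernel (cokernel.map f f' g g' w.symm)] :
    pushout.desc f' g' w ≫ cokernel.π f' ≫ cokernel.π (cokernel.map f f' g g' w.symm) = 0 := by
  apply pushout.hom_ext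
  · rw [pushout.inl_desc_assoc, cokernel.condition_assoc, zero_comp, comp_zero]
  · have h : cokernel.π f ≫ cokernel.map f f' g g' w.symm = g' ≫ cokernel.π f' :=
      cokernel.π_desc _ _ _
    rw [pushout.inr_desc_assoc, ← reassoc_of% h, cokernel.condition, comp_zero, comp_zero]

lemma cokernel_map_comp_cokernel_desc_π_pushout_desc [HasCokernel (pushout.desc f' g' w)] :
    cokernel.map f f' g g' w.symm ≫
      cokernel.desc f' (cokernel.π (pushout.desc f' g' w))
        (comp_cokernel_π_pushout_desc_left w) = 0 := by
  ext
  simp [comp_cokernel_π_pushout_desc_right w]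

noncomputable def cokernelPushoutDescIsoCokernelMap [HasCokernel (pushout.desc f' g' w)]
    [HasCokernel (cokernel.map f f' g g' w.symm)] :
    cokernel (pushout.desc f' g' w) ≅ cokernel (cokernel.map f f' g g' w.symm) where
  hom := cokernel.desc _ _ (pushout_desc_comp_cokernel_π_comp_cokernel_π_map w)
  inv := cokernel.desc _ _ (cokernel_map_comp_cokernel_desc_π_pushout_desc w)
  hom_inv_id := by ext; simp
  inv_hom_id := by ext; simp

end TotalCofiber

theorem tcof_iso_iterated_cokernels_general {C : Type*} [Category C]
    [HasZeroMorphisms C]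
    {x y x' y' : C} (f : x ⟶ y) (g : x ⟶ x') (f' : x' ⟶ y') (g' : y ⟶ y')
    (w : g ≫ f' = f ≫ g')
    [HasPushout g f] [HasCokernel (pushout.desc f' g' w)]
    [HasCokernel f] [HasCokernel f'] [HasCokernel g] [HasCokernel g']
    [HasCokernel (cokernel.map f f' g g' w.symm)]
    [HasCokernel (cokernel.map g g' f f' w)] :
    Nonempty (cokernel (pushout.desc f' g' w) ≅
      cokernel (cokernel.map f f' g g' w.symm)) ∧
    Nonempty (cokernel (pushout.desc f' g' w) ≅
      cokernel (cokernel.map g g' f f' w)) := by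
  have := hasPushout_symmetry g f
  exact ⟨⟨cokernelPushoutDescIsoCokernelMap w⟩,
    ⟨(cokernelPushoutDescSymmIso w).symm ≪≫ cokernelPushoutDescIsoCokernelMap w.symm⟩⟩

/-- For any commutative square in a category with a zero object, the total cofiber (the
cokernel of the canonical map from the pushout of the span to the final vertex) is
isomorphic to both iterated cokernels. -/
theorem tcof_iso_iterated_cokernels {C : Type*} [Category C]
    [HasZeroObject C] [HasZeroMorphisms C]
    {x y x' y' : C} (f : x ⟶ y) (g : x ⟶ x') (f' : x' ⟶ y') (g' : y ⟶ y')
    (w : g ≫ f' = f ≫ g')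
    [HasPushout g f] [HasCokernel (pushout.desc f' g' w)]
    [HasCokernel f] [HasCokernel f'] [HasCokernel g] [HasCokernel g']
    [HasCokernel (cokernel.map f f' g g' w.symm)]
    [HasCokernel (cokernel.map g g' f f' w)] :
    Nonempty (cokernel (pushout.desc f' g' w) ≅
      cokernel (cokernel.map f f' g g' w.symm)) ∧
    Nonempty (cokernel (pushout.desc f' g' w) ≅
      cokernel (cokernel.map g g' f f' w)) :=
  tcof_iso_iterated_cokernels_general f g f' g' w
end

section
/- Let C be a category with a zero object and let X be a commutative square in C, given by morphisms f : x ⟶ y, g : x ⟶ x', f' : x' ⟶ y', g' : y ⟶ y' with g' ∘ f = f' ∘ g. Assume the pullback q of the cospan (f', g') exists and all relevant kernels exist. Then the total fiber is isomorphic to both iterated kernels: tfib X = ker(can' : x ⟶ q) ≅ ker(F₁X : ker f ⟶ ker f') ≅ ker(F₂X : ker g ⟶ ker g'). -/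
/-!
A morphism kills `can' = (g, f) : x ⟶ q` exactly when it kills both `f` and `g`, so the total
fiber is the joint kernel of `f` and `g`. It can be computed as the kernel of the restriction
`ι_f ≫ g` of `g` to `ker f`; since `ι_f ≫ g = F₁X ≫ ι_{f'}` with `ι_{f'}` mono, that kernel is
`ker F₁X`. Exchanging the roles of `f` and `g` gives `ker F₂X`.
-/

open CategoryTheory CategoryTheory.Limits

namespace CategoryTheory.Limits

variable {C : Type*} [Category C] [HasZeroMorphisms C]

theorem comp_pullback_lift_eq_zero_iff {X Y Z W T : C} {f : X ⟶ Z} {g : Y ⟶ Z} [HasPullback f g]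
    (a : W ⟶ X) (b : W ⟶ Y) (w : a ≫ f = b ≫ g) (t : T ⟶ W) :
    t ≫ pullback.lift a b w = 0 ↔ t ≫ a = 0 ∧ t ≫ b = 0 := by
  refine ⟨fun ht => ⟨?_, ?_⟩, fun ⟨ha, hb⟩ => pullback.hom_ext ?_ ?_⟩
  · simpa [pullback.lift_fst] using ht =≫ pullback.fst f g
  · simpa [pullback.lift_snd] using ht =≫ pullback.snd f g
  · simp [pullback.lift_fst, ha]
  · simp [pullback.lift_snd, hb]

noncomputable def isKernelιKernelMapCompι {X Y X' Y' P : C} (b : X ⟶ Y) (b' : X' ⟶ Y')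
    (p : X ⟶ X') (q : Y ⟶ Y') (sq : b ≫ q = p ≫ b') [HasKernel b] [HasKernel b']
    [HasKernel (kernel.map b b' p q sq)] (h : X ⟶ P)
    (hh : ∀ {T : C} (t : T ⟶ X), t ≫ h = 0 ↔ t ≫ p = 0 ∧ t ≫ b = 0) :
    IsLimit (KernelFork.ofι (kernel.ι (kernel.map b b' p q sq) ≫ kernel.ι b)
      ((hh _).2 ⟨by
        rw [Category.assoc, ← kernel.lift_ι b' (kernel.ι b ≫ p) (by simp [← sq]),
          kernel.condition_assoc, zero_comp], by simp⟩)) :=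
  KernelFork.IsLimit.ofι' _ _ fun k hk =>
    have ⟨hp, hb⟩ := (hh k).1 hk
    ⟨kernel.lift _ (kernel.lift b k hb) (by ext; simp [hp]), by simp⟩

end CategoryTheory.Limits

theorem tfib_iso_iterated_kernels_general {C : Type*} [Category C]
    [HasZeroMorphisms C]
    {x y x' y' : C} (f : x ⟶ y) (g : x ⟶ x') (f' : x' ⟶ y') (g' : y ⟶ y')
    (w : g ≫ f' = f ≫ g')
    [HasPullback f' g'] [HasKernel (pullback.lift g f w)]
    [HasKernel f] [HasKernel f'] [HasKernel g] [HasKernel g']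
    [HasKernel (kernel.map f f' g g' w.symm)]
    [HasKernel (kernel.map g g' f f' w)] :
    Nonempty (kernel (pullback.lift g f w) ≅
      kernel (kernel.map f f' g g' w.symm)) ∧
    Nonempty (kernel (pullback.lift g f w) ≅
      kernel (kernel.map g g' f f' w)) :=
  ⟨⟨(kernelIsKernel _).conePointUniqueUpToIso
      (isKernelιKernelMapCompι f f' g g' w.symm _ (comp_pullback_lift_eq_zero_iff g f w))⟩,
    ⟨(kernelIsKernel _).conePointUniqueUpToIso
      (isKernelιKernelMapCompι g g' f f' w _
        fun t => (comp_pullback_lift_eq_zero_iff g f w t).trans and_comm)⟩⟩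

/-- For any commutative square in a category with a zero object, the total fiber (the
kernel of the canonical map from the initial vertex to the pullback of the cospan) is
isomorphic to both iterated kernels. -/
theorem tfib_iso_iterated_kernels {C : Type*} [Category C]
    [HasZeroObject C] [HasZeroMorphisms C]
    {x y x' y' : C} (f : x ⟶ y) (g : x ⟶ x') (f' : x' ⟶ y') (g' : y ⟶ y')
    (w : g ≫ f' = f ≫ g')
    [HasPullback f' g'] [HasKernel (pullback.lift g f w)]
    [HasKernel f] [HasKernel f'] [HasKernel g] [HasKernel g']
    [HasKernel (kernel.map f f' g g' w.symm)]
    [HasKernel (kernel.map g g' f f' w)] :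
    Nonempty (kernel (pullback.lift g f w) ≅
      kernel (kernel.map f f' g g' w.symm)) ∧
    Nonempty (kernel (pullback.lift g f w) ≅
      kernel (kernel.map g g' f f' w)) :=
  tfib_iso_iterated_kernels_general f g f' g' w
end

section
/- Let C be a category with a zero object and let X be a commutative square in C, given by morphisms f : x ⟶ y, g : x ⟶ x', f' : x' ⟶ y', g' : y ⟶ y' with g' ∘ f = f' ∘ g. Assume the pushout p of the span (g, f) exists and all relevant cokernels exist. Let u : coker f' ⟶ tcof X and v : coker g' ⟶ tcof X be the unique morphisms with u ∘ π_{f'} = π_{can} and v ∘ π_{g'} = π_{can}, where π_{can} : y' ⟶ tcof X is the cokernel projection of can : p ⟶ y'. Then the square with vertices y', coker f', coker g', tcof X, edges π_{f'} : y' ⟶ coker f', π_{g'} : y' ⟶ coker g', u and v, is a pushout square; in other words, tcof X is the pushout of the span coker f' ⟵(π_{f'})— y' —(π_{g'})⟶ coker g'. -/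
/-!
The pushout inclusions `x' ⟶ p` and `y ⟶ p` are jointly epimorphic, so a morphism out of `y'`
kills `can` as soon as it kills `f' = in_{x'} ≫ can` and `g' = in_y ≫ can`. Hence a map out of
`y'` factors through `tcof X` exactly when it factors through both `coker f'` and `coker g'`,
which is the universal property of the pushout of the two cokernel projections.
-/

open CategoryTheory CategoryTheory.Limits

namespace CategoryTheory.Limits

variable {C : Type*} [Category C] [HasZeroMorphisms C]

theorem isPushout_cokernel_π_of_jointly_epi {A B P Y : C} {i : A ⟶ P} {j : B ⟶ P}
    (hij : ∀ {Z : C} (k l : P ⟶ Z), i ≫ k = i ≫ l → j ≫ k = j ≫ l → k = l)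
    {h : P ⟶ Y} {u : A ⟶ Y} {v : B ⟶ Y} (hu : i ≫ h = u) (hv : j ≫ h = v)
    [HasCokernel u] [HasCokernel v] [HasCokernel h] :
    IsPushout (cokernel.π u) (cokernel.π v)
      (cokernel.desc u (cokernel.π h) (by rw [← hu, Category.assoc, cokernel.condition,
        comp_zero]))
      (cokernel.desc v (cokernel.π h) (by rw [← hv, Category.assoc, cokernel.condition,
        comp_zero])) := by
  refine IsPushout.of_isColimit' ⟨by simp⟩ (PushoutCocone.IsColimit.mk _
    (fun s => cokernel.desc h (cokernel.π u ≫ s.inl) ?_) (fun s => ?_) (fun s => ?_)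
    (fun s m hm _ => ?_))
  · refine hij _ 0 ?_ ?_
    · rw [comp_zero, reassoc_of% hu, cokernel.condition_assoc, zero_comp]
    · rw [comp_zero, reassoc_of% hv, s.condition, cokernel.condition_assoc, zero_comp]
  · exact coequalizer.hom_ext (by simp)
  · exact coequalizer.hom_ext (by simp [s.condition])
  · exact coequalizer.hom_ext (by rw [cokernel.π_desc, ← hm, cokernel.π_desc_assoc])

end CategoryTheory.Limits

/-- The total cofiber of a commutative square is the pushout of the span
`coker f' ⟵ y' ⟶ coker g'` formed by the two cokernel projections. -/
theorem tcof_isPushout_of_cokernel_projections {C : Type*} [Category C]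
    [HasZeroMorphisms C]
    {x y x' y' : C} (f : x ⟶ y) (g : x ⟶ x') (f' : x' ⟶ y') (g' : y ⟶ y')
    (w : g ≫ f' = f ≫ g')
    [HasPushout g f] [HasCokernel (pushout.desc f' g' w)]
    [HasCokernel f'] [HasCokernel g'] :
    IsPushout (cokernel.π f') (cokernel.π g')
      (cokernel.desc f' (cokernel.π (pushout.desc f' g' w)) (by
        have h2 : pushout.inl g f ≫ pushout.desc f' g' w ≫
            cokernel.π (pushout.desc f' g' w) = 0 := by
          rw [cokernel.condition, comp_zero]
        rwa [← Category.assoc, pushout.inl_desc] at h2))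
      (cokernel.desc g' (cokernel.π (pushout.desc f' g' w)) (by
        have h2 : pushout.inr g f ≫ pushout.desc f' g' w ≫
            cokernel.π (pushout.desc f' g' w) = 0 := by
          rw [cokernel.condition, comp_zero]
        rwa [← Category.assoc, pushout.inr_desc] at h2)) :=
  isPushout_cokernel_π_of_jointly_epi (fun _ _ => pushout.hom_ext)
    (pushout.inl_desc f' g' w) (pushout.inr_desc f' g' w)
end

section
/- Let C be a category with a zero object, kernels, and cokernels. Then there is an adjoint 7-tuple of functors between C and Arrow C: coker ⊣ L ⊣ T ⊣ Δ ⊣ S ⊣ R ⊣ ker, where coker, ker : Arrow C ⟶ C send an arrow to its cokernel, resp. kernel; L, R : C ⟶ Arrow C send x to the arrow 0 ⟶ x, resp. x ⟶ 0; T, S : Arrow C ⟶ C are the target and source functors; and Δ : C ⟶ Arrow C sends x to 𝟙_x. -/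
/-!
Each adjunction is a natural bijection of hom-sets, read off from the shape of a commutative
square: a square into `0 ⟶ x` is a map `f.right ⟶ x` killing `f`, i.e. a map out of `coker f`;
a square out of `0 ⟶ x` is a map `x ⟶ g.right`; a square into `𝟙 x` is a map `f.right ⟶ x`;
a square out of `𝟙 x` is a map `x ⟶ g.left`; a square into `x ⟶ 0` is a map `f.left ⟶ x`;
and a square out of `x ⟶ 0` is a map `x ⟶ g.left` killed by `g`, i.e. a map into `ker g`.
-/

open CategoryTheory CategoryTheory.Limits ZeroObject

variable (C : Type*) [Category C] [HasZeroObject C] [HasZeroMorphisms C]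
  [HasKernels C] [HasCokernels C]

/-- The cokernel functor `Arrow C ⥤ C`. -/
noncomputable def cokernelFunctor : Arrow C ⥤ C where
  obj f := cokernel f.hom
  map {f g} sq := cokernel.map f.hom g.hom sq.left sq.right sq.w.symm
  map_id f := by
    apply coequalizer.hom_ext
    simp
  map_comp sq sq' := by
    apply coequalizer.hom_ext
    simp

/-- The kernel functor `Arrow C ⥤ C`. -/
noncomputable def kernelFunctor : Arrow C ⥤ C where
  obj f := kernel f.hom
  map {f g} sq := kernel.map f.hom g.hom sq.left sq.right sq.w.symm
  map_id f := by
    apply equalizer.hom_ext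
    simp
  map_comp sq sq' := by
    apply equalizer.hom_ext
    simp

/-- The functor `C ⥤ Arrow C` sending an object `x` to the arrow `0 ⟶ x`. -/
noncomputable def fromZeroFunctor : C ⥤ Arrow C where
  obj x := Arrow.mk (0 : (0 : C) ⟶ x)
  map u := Arrow.homMk (u := 𝟙 (0 : C)) (v := u) (by simp)

/-- The functor `C ⥤ Arrow C` sending an object `x` to the arrow `x ⟶ 0`. -/
noncomputable def toZeroFunctor : C ⥤ Arrow C where
  obj x := Arrow.mk (0 : x ⟶ (0 : C))
  map u := Arrow.homMk (u := u) (v := 𝟙 (0 : C)) (by simp)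

/-- The constant-arrow (diagonal) functor `C ⥤ Arrow C` sending `x` to `𝟙 x`. -/
def diagArrowFunctor : C ⥤ Arrow C where
  obj x := Arrow.mk (𝟙 x)
  map u := Arrow.homMk (u := u) (v := u) (by simp)

universe v u

namespace CategoryTheory.Arrow

variable {C : Type u} [Category.{v} C]

def idHomEquiv (x : C) (g : Arrow C) : (Arrow.mk (𝟙 x) ⟶ g) ≃ (x ⟶ g.left) where
  toFun ψ := ψ.left
  invFun u := Arrow.homMk u (u ≫ g.hom) (by simp)
  left_inv ψ := by ext <;> simp
  right_inv u := rfl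

def homIdEquiv (f : Arrow C) (x : C) : (f ⟶ Arrow.mk (𝟙 x)) ≃ (f.right ⟶ x) where
  toFun ψ := ψ.right
  invFun v := Arrow.homMk (f.hom ≫ v) v (by simp)
  left_inv ψ := Arrow.hom_ext _ _ (by simpa using ψ.w.symm) rfl
  right_inv v := rfl

variable [HasZeroObject C] [HasZeroMorphisms C]

noncomputable def fromZeroHomEquiv (x : C) (g : Arrow C) :
    (Arrow.mk (0 : (0 : C) ⟶ x) ⟶ g) ≃ (x ⟶ g.right) where
  toFun ψ := ψ.right
  invFun v := Arrow.homMk 0 v (by simp)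
  left_inv ψ := Arrow.hom_ext _ _ ((isZero_zero C).eq_of_src _ _) rfl
  right_inv v := rfl

noncomputable def homToZeroEquiv (f : Arrow C) (x : C) :
    (f ⟶ Arrow.mk (0 : x ⟶ (0 : C))) ≃ (f.left ⟶ x) where
  toFun ψ := ψ.left
  invFun u := Arrow.homMk u 0 (by simp)
  left_inv ψ := Arrow.hom_ext _ _ rfl ((isZero_zero C).eq_of_tgt _ _)
  right_inv u := rfl

@[simps]
noncomputable def cokernelHomEquiv [HasCokernels C] (f : Arrow C) (x : C) :
    (cokernel f.hom ⟶ x) ≃ (f ⟶ Arrow.mk (0 : (0 : C) ⟶ x)) where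
  toFun φ := Arrow.homMk 0 (cokernel.π f.hom ≫ φ) (by simp)
  invFun ψ := cokernel.desc f.hom ψ.right (by simpa using ψ.w.symm)
  left_inv φ := by ext; simp
  right_inv ψ := Arrow.hom_ext _ _ ((isZero_zero C).eq_of_tgt _ _) (by simp)

lemma cokernelHomEquiv_symm_comp [HasCokernels C] {f f' : Arrow C} {x : C} (sq : f' ⟶ f)
    (ψ : f ⟶ Arrow.mk (0 : (0 : C) ⟶ x)) :
    (cokernelHomEquiv f' x).symm (sq ≫ ψ) =
      cokernel.map f'.hom f.hom sq.left sq.right sq.w.symm ≫ (cokernelHomEquiv f x).symm ψ := by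
  ext; simp

@[simps]
noncomputable def toZeroHomEquiv [HasKernels C] (x : C) (g : Arrow C) :
    (Arrow.mk (0 : x ⟶ (0 : C)) ⟶ g) ≃ (x ⟶ kernel g.hom) where
  toFun ψ := kernel.lift g.hom ψ.left (by simp)
  invFun k := Arrow.homMk (k ≫ kernel.ι g.hom) 0 (by simp)
  left_inv ψ := Arrow.hom_ext _ _ (by simp) ((isZero_zero C).eq_of_src _ _)
  right_inv k := by ext; simp

lemma toZeroHomEquiv_comp [HasKernels C] {x : C} {g g' : Arrow C}
    (ψ : Arrow.mk (0 : x ⟶ (0 : C)) ⟶ g) (sq : g ⟶ g') :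
    toZeroHomEquiv x g' (ψ ≫ sq) =
      toZeroHomEquiv x g ψ ≫ kernel.map g.hom g'.hom sq.left sq.right sq.w.symm := by
  ext; simp

end CategoryTheory.Arrow

section

variable {C : Type u} [Category.{v} C]

def rightFuncAdjunction : Arrow.rightFunc ⊣ diagArrowFunctor C :=
  Adjunction.mkOfHomEquiv
    { homEquiv f x := (Arrow.homIdEquiv f x).symm
      homEquiv_naturality_right _ _ := Arrow.hom_ext _ _ (Category.assoc _ _ _).symm rfl }

def diagArrowFunctorAdjunction : diagArrowFunctor C ⊣ Arrow.leftFunc :=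
  Adjunction.mkOfHomEquiv
    { homEquiv := Arrow.idHomEquiv
      homEquiv_naturality_left_symm _ _ := Arrow.hom_ext _ _ rfl (Category.assoc _ _ _) }

variable [HasZeroObject C] [HasZeroMorphisms C]

noncomputable def fromZeroFunctorAdjunction : fromZeroFunctor C ⊣ Arrow.rightFunc :=
  Adjunction.mkOfHomEquiv
    { homEquiv := Arrow.fromZeroHomEquiv
      homEquiv_naturality_left_symm _ _ :=
        Arrow.hom_ext _ _ ((isZero_zero C).eq_of_src _ _) rfl }

noncomputable def leftFuncAdjunction : Arrow.leftFunc ⊣ toZeroFunctor C :=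
  Adjunction.mkOfHomEquiv
    { homEquiv f x := (Arrow.homToZeroEquiv f x).symm
      homEquiv_naturality_right _ _ :=
        Arrow.hom_ext _ _ rfl ((isZero_zero C).eq_of_tgt _ _) }

noncomputable def cokernelFunctorAdjunction [HasCokernels C] :
    cokernelFunctor C ⊣ fromZeroFunctor C :=
  Adjunction.mkOfHomEquiv
    { homEquiv := Arrow.cokernelHomEquiv
      homEquiv_naturality_left_symm := Arrow.cokernelHomEquiv_symm_comp
      homEquiv_naturality_right _ _ :=
        Arrow.hom_ext _ _ ((isZero_zero C).eq_of_tgt _ _) (Category.assoc _ _ _).symm }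

noncomputable def toZeroFunctorAdjunction [HasKernels C] : toZeroFunctor C ⊣ kernelFunctor C :=
  Adjunction.mkOfHomEquiv
    { homEquiv := Arrow.toZeroHomEquiv
      homEquiv_naturality_left_symm _ _ :=
        Arrow.hom_ext _ _ (Category.assoc _ _ _) ((isZero_zero C).eq_of_src _ _)
      homEquiv_naturality_right := Arrow.toZeroHomEquiv_comp }

end

/-- In a category with a zero object, kernels and cokernels, there is an adjoint 7-tuple
`coker ⊣ L ⊣ T ⊣ Δ ⊣ S ⊣ R ⊣ ker` between `Arrow C` and `C`, where `L x = (0 ⟶ x)`,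
`T` is the target functor, `Δ x = 𝟙 x`, `S` is the source functor, and `R x = (x ⟶ 0)`. -/
theorem adjoint_seven_tuple :
    Nonempty (cokernelFunctor C ⊣ fromZeroFunctor C) ∧
    Nonempty (fromZeroFunctor C ⊣ Arrow.rightFunc) ∧
    Nonempty (Arrow.rightFunc ⊣ diagArrowFunctor C) ∧
    Nonempty (diagArrowFunctor C ⊣ Arrow.leftFunc) ∧
    Nonempty (Arrow.leftFunc ⊣ toZeroFunctor C) ∧
    Nonempty (toZeroFunctor C ⊣ kernelFunctor C) :=
  ⟨⟨cokernelFunctorAdjunction⟩, ⟨fromZeroFunctorAdjunction⟩, ⟨rightFuncAdjunction⟩,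
    ⟨diagArrowFunctorAdjunction⟩, ⟨leftFuncAdjunction⟩, ⟨toZeroFunctorAdjunction⟩⟩
end

section
/- Let C be a category with an initial object ⊥ and a terminal object ⊤. If the functor L : C ⟶ Arrow C, sending x to the unique arrow ⊥ ⟶ x, admits a left adjoint, then C has a zero object (i.e., the initial object ⊥ is also terminal). -/
open CategoryTheory CategoryTheory.Limits

variable (C : Type*) [Category C] [HasInitial C] [HasTerminal C]

/-- The functor `C ⥤ Arrow C` sending `x` to the unique arrow `⊥ ⟶ x`. -/
noncomputable def fromInitialFunctor : C ⥤ Arrow C where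
  obj x := Arrow.mk (initial.to x)
  map u := Arrow.homMk (u := 𝟙 (⊥_ C)) (v := u) (by simp)

namespace CategoryTheory.Arrow

variable {D : Type*} [Category D]

/-- Morphisms `𝟙 X ⟶ f` in `Arrow D` correspond to morphisms `X ⟶ f.left`. -/
noncomputable def isTerminalLeft {f : Arrow D} (hf : IsTerminal f) : IsTerminal f.left :=
  IsTerminal.ofUniqueHom (fun X => (hf.from (Arrow.mk (𝟙 X))).left) fun X m =>
    congrArg CommaMorphism.left (hf.hom_ext (Arrow.homMk' (f := 𝟙 X) m (m ≫ f.hom)) _)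

end CategoryTheory.Arrow

/-- If the functor `x ↦ (⊥ ⟶ x) : C ⥤ Arrow C` admits a left adjoint, then the initial
object of `C` is also terminal, i.e. `C` has a zero object. -/
theorem hasZero_of_fromInitial_isRightAdjoint
    [(fromInitialFunctor C).IsRightAdjoint] :
    Nonempty (IsTerminal (⊥_ C)) :=
  ⟨Arrow.isTerminalLeft (terminalIsTerminal.isTerminalObj (fromInitialFunctor C) (⊤_ C))⟩
end

section
/- Let C be a category with an initial object ⊥ and a terminal object ⊤. If the functor R : C ⟶ Arrow C, sending x to the unique arrow x ⟶ ⊤, admits a right adjoint, then C has a zero object (i.e., the terminal object ⊤ is also initial). -/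
open CategoryTheory CategoryTheory.Limits

variable (C : Type*) [Category C] [HasInitial C] [HasTerminal C]

/-- The functor `C ⥤ Arrow C` sending `x` to the unique arrow `x ⟶ ⊤`. -/
noncomputable def toTerminalFunctor : C ⥤ Arrow C where
  obj x := Arrow.mk (terminal.from x)
  map u := Arrow.homMk (u := u) (v := 𝟙 (⊤_ C)) (by simp)

/-- Squares `f ⟶ 𝟙 y` are the same as maps `f.right ⟶ y`. -/
def Arrow.isInitialRight {D : Type*} [Category D] {f : Arrow D} (hf : IsInitial f) :
    IsInitial f.right :=
  IsInitial.ofUniqueHom (fun y => (hf.to (Arrow.mk (𝟙 y))).right)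
    (fun y v => congrArg CommaMorphism.right
      (hf.hom_ext (Arrow.homMk (g := Arrow.mk (𝟙 y)) (u := f.hom ≫ v) (v := v) (by simp)) _))

/-- If the functor `x ↦ (x ⟶ ⊤) : C ⥤ Arrow C` admits a right adjoint, then the terminal
object of `C` is also initial, i.e. `C` has a zero object. -/
theorem hasZero_of_toTerminal_isLeftAdjoint
    [(toTerminalFunctor C).IsLeftAdjoint] :
    Nonempty (IsInitial (⊤_ C)) :=
  ⟨Arrow.isInitialRight (initialIsInitial.isInitialObj (toTerminalFunctor C) (⊥_ C))⟩
end

section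
/- Let C be a category with a zero object such that every pushout square in C is also a pullback square. Then every object of C is a zero object (equivalently, C is equivalent to the terminal category). -/
open CategoryTheory CategoryTheory.Limits ZeroObject

namespace CategoryTheory

variable {C : Type*} [Category C] {a b c d : C} {f : a ⟶ b} {g : a ⟶ c} {inl : b ⟶ d}
  {inr : c ⟶ d}

theorem IsPushout.of_isZero (hb : IsZero b) (hc : IsZero c) (hd : IsZero d) :
    IsPushout f g inl inr :=
  ⟨⟨hd.eq_of_tgt _ _⟩, ⟨PushoutCocone.IsColimit.mk _ (fun s => hd.to_ s.pt)
    (fun _ => hb.eq_of_src _ _) (fun _ => hc.eq_of_src _ _) (fun _ _ _ _ => hd.eq_of_src _ _)⟩⟩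

theorem IsPullback.isZero_of_isZero (h : IsPullback f g inl inr) (hb : IsZero b)
    (hc : IsZero c) : IsZero a :=
  hb.of_iso
    { hom := f
      inv := hb.to_ a
      hom_inv_id := h.hom_ext (hb.eq_of_tgt _ _) (hc.eq_of_tgt _ _)
      inv_hom_id := hb.eq_of_src _ _ }

end CategoryTheory

theorem all_isZero_of_pushouts_are_pullbacks_general {C : Type*} [Category C]
    [HasZeroObject C]
    (h : ∀ {a b c d : C} (f : a ⟶ b) (g : a ⟶ c) (inl : b ⟶ d) (inr : c ⟶ d),
      IsPushout f g inl inr → IsPullback f g inl inr) :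
    ∀ x : C, IsZero x := by
  intro x
  have hz : IsZero (0 : C) := isZero_zero C
  have hpushout : IsPushout (hz.from_ x) (hz.from_ x) (𝟙 0) (𝟙 0) := .of_isZero hz hz hz
  exact (h _ _ _ _ hpushout).isZero_of_isZero hz hz

/-- If in a category with a zero object every pushout square is also a pullback square,
then every object is a zero object, i.e. the category is equivalent to the terminal
category. -/
theorem all_isZero_of_pushouts_are_pullbacks {C : Type*} [Category C]
    [HasZeroObject C] [HasZeroMorphisms C]
    (h : ∀ {a b c d : C} (f : a ⟶ b) (g : a ⟶ c) (inl : b ⟶ d) (inr : c ⟶ d),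
      IsPushout f g inl inr → IsPullback f g inl inr) :
    ∀ x : C, IsZero x :=
  all_isZero_of_pushouts_are_pullbacks_general h
end
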